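/- If G is a finite König–Egerváry graph, then every maximum independent set of G is a critical independent set. -/

import Mathlib

/-!
For every vertex set `A` and matching `M`, each vertex of `A` covered by `M` has its partner in
`N(A)`, so `|A| + 2|M| ≤ |V| + |N(A)|`; hence `|A| - |N(A)| ≤ |V| - 2μ(G)` for all `A`.
A maximum independent set `S` is maximal, so `V` is the disjoint union of `S` and `N(S)` and
`|S| - |N(S)| = 2α(G) - |V|`, which is `|V| - 2μ(G)` precisely when `G` is König–Egerváry.
-/

namespace KEPaper

open SimpleGraph

variable {V : Type*}

/-- `nbhd G S` is the set of vertices having a neighbor in `S`. -/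
def nbhd (G : SimpleGraph V) (S : Set V) : Set V := {v | ∃ w ∈ S, G.Adj v w}

/-- `S` is an independent set of `G`: no two vertices of `S` are adjacent. -/
def IsIndep (G : SimpleGraph V) (S : Set V) : Prop :=
  S.Pairwise fun u v => ¬ G.Adj u v

/-- The independence number `α(G)`: maximum cardinality of an independent set. -/
noncomputable def indepNum (G : SimpleGraph V) : ℕ :=
  sSup {n | ∃ S : Set V, IsIndep G S ∧ S.ncard = n}

/-- The matching number `μ(G)`: maximum cardinality of a matching. -/
noncomputable def matchNum (G : SimpleGraph V) : ℕ :=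
  sSup {n | ∃ M : Subgraph G, M.IsMatching ∧ M.edgeSet.ncard = n}

/-- `S` is a maximum independent set of `G`. -/
def IsMaxIndep (G : SimpleGraph V) (S : Set V) : Prop :=
  IsIndep G S ∧ S.ncard = indepNum G

/-- The critical difference `d(G) = max {|S| - |N(S)| : S independent}`. -/
noncomputable def critDiff (G : SimpleGraph V) : ℤ :=
  sSup {d : ℤ | ∃ S : Set V, IsIndep G S ∧ d = (S.ncard : ℤ) - ((nbhd G S).ncard : ℤ)}

/-- `S` is a critical independent set: independent with `|S| - |N(S)| = d(G)`. -/
def IsCritIndep (G : SimpleGraph V) (S : Set V) : Prop :=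
  IsIndep G S ∧ (S.ncard : ℤ) - ((nbhd G S).ncard : ℤ) = critDiff G

/-- `core G` is the intersection of all maximum independent sets of `G`. -/
def core (G : SimpleGraph V) : Set V := ⋂ S ∈ {S : Set V | IsMaxIndep G S}, S

/-- `G` is a König–Egerváry graph: `|V(G)| = α(G) + μ(G)`. -/
def KoenigEgervary (G : SimpleGraph V) : Prop :=
  Nat.card V = indepNum G + matchNum G

/-- `A` is a local maximum independent set of `G`: it is a maximum independent
set of the subgraph of `G` induced by `N[A] = A ∪ N(A)`. -/
def IsLocalMaxIndep (G : SimpleGraph V) (A : Set V) : Prop :=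
  IsMaxIndep (G.induce (A ∪ nbhd G A)) {x : ↥(A ∪ nbhd G A) | ↑x ∈ A}

section

variable {G : SimpleGraph V}

lemma _root_.SimpleGraph.Subgraph.IsMatching.ncard_verts [Finite V] {M : G.Subgraph}
    (hM : M.IsMatching) : M.verts.ncard = 2 * M.edgeSet.ncard := by
  classical
  have : Fintype V := Fintype.ofFinite V
  have hdeg : ∀ v : M.verts, M.coe.degree v = 1 := fun v => by
    rw [Subgraph.coe_degree, Subgraph.degree_eq_one_iff_existsUnique_adj]
    exact hM v.2
  have hedges : M.coe.edgeSet.ncard = M.edgeSet.ncard := by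
    rw [← M.image_coe_edgeSet_coe,
      Set.ncard_image_of_injective _ (Sym2.map.injective Subtype.val_injective)]
  calc M.verts.ncard = ∑ v : M.verts, M.coe.degree v := by
        simp [hdeg, Set.ncard_eq_toFinset_card']
    _ = 2 * M.coe.edgeFinset.card := by convert M.coe.sum_degrees_eq_twice_card_edges
    _ = 2 * M.edgeSet.ncard := by
        rw [← hedges, Set.ncard_eq_toFinset_card', edgeFinset]

lemma _root_.SimpleGraph.Subgraph.IsMatching.ncard_inter_verts_le_ncard_nbhd [Finite V]
    {M : G.Subgraph} (hM : M.IsMatching) (A : Set V) :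
    (A ∩ M.verts).ncard ≤ (nbhd G A).ncard := by
  choose! partner hpartner using fun v (hv : v ∈ M.verts) => (hM hv).exists
  refine Set.ncard_le_ncard_of_injOn partner ?_ ?_
  · rintro a ⟨haA, haM⟩
    exact ⟨a, haA, (M.adj_sub (hpartner a haM)).symm⟩
  · rintro a ⟨-, haM⟩ b ⟨-, hbM⟩ hab
    exact hM.eq_of_adj_right (hpartner a haM) (hab ▸ hpartner b hbM)

lemma _root_.SimpleGraph.Subgraph.IsMatching.ncard_add_two_mul_le [Finite V] {M : G.Subgraph}
    (hM : M.IsMatching) (A : Set V) :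
    A.ncard + 2 * M.edgeSet.ncard ≤ Nat.card V + (nbhd G A).ncard := by
  have hunion := Set.ncard_union_add_ncard_inter A M.verts
  have huniv := Set.ncard_le_card (A ∪ M.verts)
  have hinter := hM.ncard_inter_verts_le_ncard_nbhd A
  have hverts := hM.ncard_verts
  omega

lemma exists_isMatching_ncard_eq_matchNum [Finite V] (G : SimpleGraph V) :
    ∃ M : G.Subgraph, M.IsMatching ∧ M.edgeSet.ncard = matchNum G := by
  refine Nat.sSup_mem (s := {n | ∃ M : G.Subgraph, M.IsMatching ∧ M.edgeSet.ncard = n})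
    ⟨0, ⊥, fun _ hv => hv.elim, by simp⟩ ⟨Nat.card (Sym2 V), ?_⟩
  rintro n ⟨M, -, rfl⟩
  exact Set.ncard_le_card _

variable {S : Set V}

lemma IsIndep.ncard_le_indepNum [Finite V] (hS : IsIndep G S) : S.ncard ≤ indepNum G :=
  le_csSup ⟨Nat.card V, by rintro n ⟨T, -, rfl⟩; exact Set.ncard_le_card T⟩ ⟨S, hS, rfl⟩

lemma IsIndep.disjoint_nbhd (hS : IsIndep G S) : Disjoint S (nbhd G S) :=
  Set.disjoint_left.2 fun _ hv ⟨_, hw, hadj⟩ => hS hv hw hadj.ne hadj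

lemma IsMaxIndep.union_nbhd_eq_univ [Finite V] (hS : IsMaxIndep G S) :
    S ∪ nbhd G S = Set.univ := by
  refine Set.eq_univ_of_forall fun v => by_contra fun hv => ?_
  obtain ⟨hvS, hvN⟩ := not_or.1 hv
  have hind : IsIndep G (insert v S) :=
    hS.1.insert fun w hw _ => ⟨fun h => hvN ⟨w, hw, h⟩, fun h => hvN ⟨w, hw, h.symm⟩⟩
  have := hind.ncard_le_indepNum
  rw [Set.ncard_insert_of_notMem hvS, hS.2] at this
  omega

lemma IsMaxIndep.ncard_add_ncard_nbhd [Finite V] (hS : IsMaxIndep G S) :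
    S.ncard + (nbhd G S).ncard = Nat.card V := by
  rw [← Set.ncard_union_eq hS.1.disjoint_nbhd, hS.union_nbhd_eq_univ, Set.ncard_univ]

lemma IsIndep.isCritIndep_of_forall_le (hS : IsIndep G S)
    (hle : ∀ A, IsIndep G A →
      (A.ncard : ℤ) - (nbhd G A).ncard ≤ (S.ncard : ℤ) - (nbhd G S).ncard) :
    IsCritIndep G S := by
  refine ⟨hS, Eq.symm <| IsGreatest.csSup_eq ⟨⟨S, hS, rfl⟩, ?_⟩⟩
  rintro d ⟨A, hA, rfl⟩
  exact hle A hA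

end

/-- If `G` is a finite König–Egerváry graph, then every maximum independent set
of `G` is a critical independent set. -/
theorem maxIndep_isCritIndep_of_KE [Finite V] (G : SimpleGraph V)
    (hG : KoenigEgervary G) :
    ∀ S : Set V, IsMaxIndep G S → IsCritIndep G S := by
  intro S hS
  obtain ⟨M, hM, hMcard⟩ := exists_isMatching_ncard_eq_matchNum G
  have hKE : Nat.card V = indepNum G + matchNum G := hG
  have hα : S.ncard = indepNum G := hS.2
  have hSN := hS.ncard_add_ncard_nbhd
  refine hS.1.isCritIndep_of_forall_le fun A _ => ?_
  have hA := hM.ncard_add_two_mul_le A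
  omega

end KEPaper
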